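/- arXiv:1211.1073 — 3 statements merged into one kernel-verified Lean document; each statement's English description precedes it below -/
import Mathlib

section
/- Let C ⊆ ℝ^p be a closed convex set, let x⋆ ∈ C, let z ∼ N(0, I_p), and let ȳ = x⋆ + (σ/√n) z. Define x̂ as the Euclidean projection of ȳ onto C. Then E[‖x⋆ − x̂‖₂²] ≤ (σ²/n) · E[ sup_{d ∈ T_C(x⋆), ‖d‖₂ ≤ 1} ⟨d, z⟩² ], where T_C(x⋆) is the tangent cone of C at x⋆. -/
open MeasureTheory

noncomputable def stdGaussian (p : ℕ) : Measure (EuclideanSpace ℝ (Fin p)) :=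
  (Measure.pi fun _ : Fin p => ProbabilityTheory.gaussianReal 0 1).map
    (MeasurableEquiv.toLp 2 (Fin p → ℝ))

/-- Tangent cone of a convex set `C` at `a`: conic hull of `{b - a | b ∈ C}`. -/
def tangentCone {p : ℕ} (C : Set (EuclideanSpace ℝ (Fin p))) (a : EuclideanSpace ℝ (Fin p)) :
    Set (EuclideanSpace ℝ (Fin p)) :=
  {d | ∃ r : ℝ, 0 ≤ r ∧ ∃ b ∈ C, d = r • (b - a)}

/-- Gaussian squared-complexity `G(D) = E[sup_{a ∈ D} ⟨a, g⟩²]` for `g ∼ N(0, I_p)`. -/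
noncomputable def gaussSqComplexity {p : ℕ} (D : Set (EuclideanSpace ℝ (Fin p))) : ℝ :=
  ∫ g, (⨆ a : D, (inner ℝ (a : EuclideanSpace ℝ (Fin p)) g : ℝ) ^ 2) ∂(stdGaussian p)

lemma aux_map_eval_pi {p : ℕ} (i : Fin p) :
    (Measure.pi fun _ : Fin p => ProbabilityTheory.gaussianReal 0 1).map (Function.eval i)
      = ProbabilityTheory.gaussianReal 0 1 := by
  ext s hs
  rw [Measure.map_apply (measurable_pi_apply i) hs, ← Set.univ_pi_update_univ, Measure.pi_pi]
  rw [Finset.prod_eq_single i]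
  · simp
  · intro j _ hj; simp [Function.update_of_ne hj]
  · simp

lemma aux_int_sq_gauss : Integrable (fun x : ℝ => x ^ 2) (ProbabilityTheory.gaussianReal 0 1) := by
  rw [ProbabilityTheory.gaussianReal_of_var_ne_zero 0 one_ne_zero,
    integrable_withDensity_iff (ProbabilityTheory.measurable_gaussianPDF 0 1)
      (Filter.Eventually.of_forall fun x => ENNReal.ofReal_lt_top)]
  refine (((integrable_rpow_mul_exp_neg_mul_sq (b := 1/2) (by norm_num) (s := 2)
    (by norm_num)).const_mul ((Real.sqrt (2 * Real.pi))⁻¹)).congr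
    (Filter.Eventually.of_forall fun x => ?_))
  simp only [ProbabilityTheory.gaussianPDF_def]
  rw [ENNReal.toReal_ofReal (ProbabilityTheory.gaussianPDFReal_nonneg _ _ _),
    ProbabilityTheory.gaussianPDFReal]
  rw [show ((2:ℝ) : ℝ) * Real.pi * ((1:NNReal) : ℝ) = 2 * Real.pi by norm_num]
  rw [show -(x - 0)^2/(2*((1:NNReal):ℝ)) = -(1/2) * x^2 by push_cast; ring]
  rw [Real.rpow_two]
  ring

lemma aux_int_normSq (p : ℕ) :
    Integrable (fun z : EuclideanSpace ℝ (Fin p) => ‖z‖ ^ 2) (stdGaussian p) := by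
  rw [stdGaussian, integrable_map_equiv]
  have h : ((fun z : EuclideanSpace ℝ (Fin p) => ‖z‖ ^ 2) ∘
      (MeasurableEquiv.toLp 2 (Fin p → ℝ))) = fun y => ∑ i, y i ^ 2 := by
    funext y
    simp only [Function.comp_apply, MeasurableEquiv.coe_toLp]
    rw [EuclideanSpace.norm_eq, Real.sq_sqrt (by positivity)]
    simp [PiLp.toLp_apply, sq_abs]
  rw [h]
  apply integrable_finset_sum
  intro i _
  have h2 : Integrable (fun x : ℝ => x ^ 2)
      ((Measure.pi fun _ : Fin p => ProbabilityTheory.gaussianReal 0 1).map (Function.eval i)) := by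
    rw [aux_map_eval_pi]; exact aux_int_sq_gauss
  exact h2.comp_measurable (measurable_pi_apply i)

theorem stmt0 {p : ℕ} (n : ℕ) (hn : 0 < n) (σ : ℝ) (hσ : 0 < σ)
    (C : Set (EuclideanSpace ℝ (Fin p))) (hCc : IsClosed C) (hCconv : Convex ℝ C)
    (xstar : EuclideanSpace ℝ (Fin p)) (hx : xstar ∈ C)
    (xhat : EuclideanSpace ℝ (Fin p) → EuclideanSpace ℝ (Fin p))
    (hproj : ∀ z, xhat z ∈ C ∧
      ∀ w ∈ C, ‖(xstar + (σ / Real.sqrt n) • z) - xhat z‖ ≤ ‖(xstar + (σ / Real.sqrt n) • z) - w‖) :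
    ∫ z, ‖xstar - xhat z‖ ^ 2 ∂(stdGaussian p) ≤
      (σ ^ 2 / n) * gaussSqComplexity {d ∈ tangentCone C xstar | ‖d‖ ≤ 1} := by
  classical
  set c : ℝ := σ / Real.sqrt n with hc_def
  have hn' : (0:ℝ) < n := by exact_mod_cast hn
  have hc : 0 < c := div_pos hσ (Real.sqrt_pos.mpr hn')
  set D : Set (EuclideanSpace ℝ (Fin p)) := {d ∈ tangentCone C xstar | ‖d‖ ≤ 1} with hD_def
  have h0D : (0 : EuclideanSpace ℝ (Fin p)) ∈ D :=
    ⟨⟨0, le_refl 0, xstar, hx, by simp⟩, by simp⟩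
  haveI : Nonempty D := ⟨⟨0, h0D⟩⟩
  set S : EuclideanSpace ℝ (Fin p) → ℝ :=
    fun z => ⨆ a : D, (inner ℝ (a : EuclideanSpace ℝ (Fin p)) z : ℝ) ^ 2 with hS_def
  have hsq : ∀ (a : D) (z : EuclideanSpace ℝ (Fin p)),
      (inner ℝ (a : EuclideanSpace ℝ (Fin p)) z : ℝ) ^ 2 ≤ ‖z‖ ^ 2 := by
    intro a z
    have hi := abs_real_inner_le_norm (a : EuclideanSpace ℝ (Fin p)) z
    have h1 := sq_le_sq' (abs_le.mp hi).1 (abs_le.mp hi).2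
    refine h1.trans ?_
    have ha := a.2.2
    calc (‖(a : EuclideanSpace ℝ (Fin p))‖ * ‖z‖) ^ 2 ≤ (1 * ‖z‖) ^ 2 := by gcongr
      _ = ‖z‖ ^ 2 := by ring
  have hbdd : ∀ z : EuclideanSpace ℝ (Fin p),
      BddAbove (Set.range fun a : D => (inner ℝ (a : EuclideanSpace ℝ (Fin p)) z : ℝ) ^ 2) := by
    intro z
    refine ⟨‖z‖ ^ 2, ?_⟩
    rintro _ ⟨a, rfl⟩
    exact hsq a z
  have hS_nonneg : ∀ z, 0 ≤ S z := by
    intro z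
    have := le_ciSup (hbdd z) (⟨0, h0D⟩ : D)
    simpa using this
  have hS_le : ∀ z, S z ≤ ‖z‖ ^ 2 := fun z => ciSup_le fun a => hsq a z
  have hS_meas : Measurable S := by
    refine (lowerSemicontinuous_ciSup hbdd fun a => ?_).measurable
    exact ((continuous_const.inner continuous_id).pow 2).lowerSemicontinuous
  have hS_int : Integrable S (stdGaussian p) := by
    refine (aux_int_normSq p).mono' hS_meas.aestronglyMeasurable
      (Filter.Eventually.of_forall fun z => ?_)
    rw [Real.norm_eq_abs, abs_of_nonneg (hS_nonneg z)]
    exact hS_le z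
  have key : ∀ z : EuclideanSpace ℝ (Fin p), ‖xstar - xhat z‖ ^ 2 ≤ c ^ 2 * S z := by
    intro z
    obtain ⟨hmem, hmin⟩ := hproj z
    haveI : Nonempty C := ⟨⟨xstar, hx⟩⟩
    set y : EuclideanSpace ℝ (Fin p) := xstar + c • z with hy_def
    have heq : ‖y - xhat z‖ = ⨅ w : C, ‖y - w‖ := by
      refine le_antisymm (le_ciInf fun w => hmin w w.2) ?_
      exact ciInf_le ⟨0, by rintro _ ⟨w, rfl⟩; exact norm_nonneg _⟩ (⟨xhat z, hmem⟩ : C)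
    have hvi := (norm_eq_iInf_iff_real_inner_le_zero hCconv hmem).mp heq xstar hx
    set u : EuclideanSpace ℝ (Fin p) := xhat z - xstar with hu_def
    have hyu : y - xhat z = c • z - u := by rw [hy_def, hu_def]; abel
    have hxu : xstar - xhat z = -u := by rw [hu_def]; abel
    have hineq : ‖u‖ ^ 2 ≤ c * (inner ℝ u z : ℝ) := by
      rw [hyu, hxu] at hvi
      have hexp : (inner ℝ (c • z - u) (-u) : ℝ) = -(c * (inner ℝ u z : ℝ)) + ‖u‖ ^ 2 := by
        rw [inner_sub_left, inner_neg_right, inner_neg_right, real_inner_smul_left,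
          real_inner_self_eq_norm_sq, real_inner_comm]
        ring
      rw [hexp] at hvi
      linarith
    rw [show ‖xstar - xhat z‖ = ‖u‖ by rw [hxu, norm_neg]]
    by_cases hu0 : u = 0
    · rw [hu0]
      simpa using mul_nonneg (sq_nonneg c) (hS_nonneg z)
    · have hupos : 0 < ‖u‖ := norm_pos_iff.mpr hu0
      set d : EuclideanSpace ℝ (Fin p) := ‖u‖⁻¹ • u with hd_def
      have hdD : d ∈ D := by
        constructor
        · exact ⟨‖u‖⁻¹, inv_nonneg.mpr (norm_nonneg u), xhat z, hmem, rfl⟩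
        · rw [hd_def, norm_smul, norm_inv, norm_norm, inv_mul_cancel₀ hupos.ne']
      have hdz : (inner ℝ d z : ℝ) = ‖u‖⁻¹ * (inner ℝ u z : ℝ) := real_inner_smul_left _ _ _
      have hsup : (inner ℝ d z : ℝ) ^ 2 ≤ S z := le_ciSup (hbdd z) (⟨d, hdD⟩ : D)
      have h4 : ‖u‖ ^ 2 * ‖u‖ ^ 2 ≤ (c * (inner ℝ u z : ℝ)) * (c * (inner ℝ u z : ℝ)) :=
        mul_le_mul hineq hineq (sq_nonneg _) (le_trans (sq_nonneg _) hineq)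
      have hgoal : ‖u‖ ^ 2 ≤ c ^ 2 * (inner ℝ d z : ℝ) ^ 2 := by
        rw [hdz]
        have h5 : ‖u‖ ^ 2 ≤ c ^ 2 * (inner ℝ u z : ℝ) ^ 2 / ‖u‖ ^ 2 :=
          (le_div_iff₀ (by positivity)).mpr (by nlinarith)
        refine h5.trans (le_of_eq ?_)
        field_simp
      exact hgoal.trans (mul_le_mul_of_nonneg_left hsup (sq_nonneg c))
  have hconst : (σ ^ 2 / n : ℝ) = c ^ 2 := by
    rw [hc_def, div_pow, Real.sq_sqrt (Nat.cast_nonneg n)]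
  calc ∫ z, ‖xstar - xhat z‖ ^ 2 ∂(stdGaussian p)
      ≤ ∫ z, c ^ 2 * S z ∂(stdGaussian p) :=
        integral_mono_of_nonneg (Filter.Eventually.of_forall fun z => sq_nonneg _)
          (hS_int.const_mul _) (Filter.Eventually.of_forall key)
    _ = (σ ^ 2 / n) * gaussSqComplexity D := by
        rw [integral_const_mul, hconst]; rfl
end

section
/- Let ψ(μ) be the solid angle (angular radius in radians) of a spherical cap in S^{p−1} of normalized volume μ, for μ ∈ ((1/4)exp(−p/20), 1/(4e²)). Then ψ(μ) ≥ (π/2)·(1 − √(2 log(1/(4μ)) / (p−1))). -/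
open MeasureTheory

/-- Normalized spherical volume: fraction of the unit sphere covered by `A`. -/
noncomputable def sphereVol (p : ℕ) (A : Set (EuclideanSpace ℝ (Fin p))) : ℝ :=
  ((μH[(p : ℝ) - 1] : Measure (EuclideanSpace ℝ (Fin p)))
      (A ∩ Metric.sphere (0 : EuclideanSpace ℝ (Fin p)) 1)).toReal /
    ((μH[(p : ℝ) - 1] : Measure (EuclideanSpace ℝ (Fin p)))
      (Metric.sphere (0 : EuclideanSpace ℝ (Fin p)) 1)).toReal

/-- Normalized volume of the spherical cap of angular radius `ψ`:
`{a ∈ S^{p-1} : a₁ ≥ cos ψ}`. -/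
noncomputable def capVolAngle (p : ℕ) [NeZero p] (ψ : ℝ) : ℝ :=
  sphereVol p {a : EuclideanSpace ℝ (Fin p) | Real.cos ψ ≤ a 0}

namespace CapAux

open Metric Set Pointwise
open scoped ENNReal NNReal

variable {p : ℕ}

/-- Abbreviation for Euclidean space. -/
abbrev E (p : ℕ) := EuclideanSpace ℝ (Fin p)

lemma coord_cont (i : Fin p) : Continuous fun a : E p => a i :=
  (continuous_apply i).comp (PiLp.continuous_ofLp (p := 2) (β := fun _ : Fin p => ℝ))

lemma abs_coord_le (w : E p) (i : Fin p) : |w i| ≤ ‖w‖ := by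
  rw [EuclideanSpace.norm_eq, ← Real.sqrt_sq_eq_abs]
  apply Real.sqrt_le_sqrt
  simpa [Real.norm_eq_abs, sq_abs] using
    Finset.single_le_sum (f := fun j => ‖w j‖ ^ 2) (fun j _ => sq_nonneg _) (Finset.mem_univ i)

/-- Open radial sector over a subset of the unit sphere. -/
def sect (p : ℕ) (u : Set (E p)) : Set (E p) :=
  {z | ‖z‖ < 1 ∧ 0 < ‖z‖ ∧ ‖z‖⁻¹ • z ∈ u}

lemma measurableSet_sect {u : Set (E p)} (hu : MeasurableSet u) : MeasurableSet (sect p u) := by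
  have h1 : MeasurableSet {z : E p | ‖z‖ < 1} := measurableSet_lt measurable_norm measurable_const
  have h2 : MeasurableSet {z : E p | 0 < ‖z‖} := measurableSet_lt measurable_const measurable_norm
  have h3 : Measurable fun z : E p => ‖z‖⁻¹ • z := (measurable_norm.inv).smul measurable_id
  have : sect p u = {z : E p | ‖z‖ < 1} ∩ ({z : E p | 0 < ‖z‖} ∩
      ((fun z : E p => ‖z‖⁻¹ • z) ⁻¹' u)) := by
    ext z; simp [sect, and_assoc]
  rw [this]
  exact h1.inter (h2.inter (h3 hu))

lemma smul_eq_sect {u : Set (E p)} (hu : u ⊆ sphere (0 : E p) 1) :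
    Ioo (0 : ℝ) 1 • u = sect p u := by
  ext z
  constructor
  · intro hz
    obtain ⟨ρ, hρ, a, ha, rfl⟩ := Set.mem_smul.1 hz
    have hna : ‖a‖ = 1 := mem_sphere_zero_iff_norm.1 (hu ha)
    have hρ0 : 0 < ρ := hρ.1
    have hz' : ‖ρ • a‖ = ρ := by
      rw [norm_smul, hna, Real.norm_eq_abs, abs_of_pos hρ0, mul_one]
    refine ⟨by rw [hz']; exact hρ.2, by rw [hz']; exact hρ0, ?_⟩
    rw [hz', inv_smul_smul₀ hρ0.ne']
    exact ha
  · rintro ⟨h1, h2, h3⟩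
    exact Set.mem_smul.2 ⟨‖z‖, ⟨h2, h1⟩, ‖z‖⁻¹ • z, h3, smul_inv_smul₀ h2.ne' z⟩

lemma sect_preimage (e : E p ≃ₗᵢ[ℝ] E p) (u : Set (E p)) :
    ⇑e ⁻¹' sect p u = sect p (⇑e ⁻¹' u) := by
  ext z
  simp only [sect, Set.mem_preimage, Set.mem_setOf_eq, e.norm_map]
  rw [LinearIsometryEquiv.map_smul]

lemma image_eq_preimage_symm (e : E p ≃ₗᵢ[ℝ] E p) (w : Set (E p)) :
    ⇑e '' w = ⇑e.symm ⁻¹' w := by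
  ext z
  constructor
  · rintro ⟨a, ha, rfl⟩; simpa using ha
  · intro hz; exact ⟨e.symm z, hz, by simp⟩

lemma image_cap (e : E p ≃ₗᵢ[ℝ] E p) (x : E p) (r : ℝ) :
    ⇑e '' (closedBall x r ∩ sphere 0 1) = closedBall (e x) r ∩ sphere 0 1 := by
  rw [Set.image_inter e.injective]
  congr 1
  · simpa using e.toIsometryEquiv.image_closedBall x r
  · simpa using e.toIsometryEquiv.image_sphere 0 1

/-- Reflection sending `x` to `y`. -/
lemma exists_isometry (x y : E p) (hxy : ‖x‖ = ‖y‖) : ∃ e : E p ≃ₗᵢ[ℝ] E p, e x = y :=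
  ⟨Submodule.reflection (ℝ ∙ (x - y))ᗮ, Submodule.reflection_sub hxy⟩

lemma hp_dim [NeZero p] : (0 : ℝ) ≤ (p : ℝ) - 1 := by
  have : (1 : ℝ) ≤ p := by exact_mod_cast Nat.pos_of_ne_zero (NeZero.ne p)
  linarith

/-- Uniformity of Hausdorff measure on metric caps. -/
lemma hausdorff_cap_uniform [NeZero p] {x y : E p} (hx : x ∈ sphere (0 : E p) 1)
    (hy : y ∈ sphere (0 : E p) 1) (r : ℝ) :
    μH[(p : ℝ) - 1] (closedBall x r ∩ sphere (0 : E p) 1) =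
      μH[(p : ℝ) - 1] (closedBall y r ∩ sphere (0 : E p) 1) := by
  have hxy : ‖x‖ = ‖y‖ := by
    rw [mem_sphere_zero_iff_norm.1 hx, mem_sphere_zero_iff_norm.1 hy]
  obtain ⟨e, hex⟩ := exists_isometry x y hxy
  calc μH[(p : ℝ) - 1] (closedBall x r ∩ sphere (0 : E p) 1)
      = μH[(p : ℝ) - 1] (⇑e '' (closedBall x r ∩ sphere (0 : E p) 1)) :=
        (e.isometry.hausdorffMeasure_image (Or.inl hp_dim) _).symm
    _ = _ := by rw [image_cap, hex]

/-- The sphere surface measure, pushed to the ambient space. -/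
noncomputable def nu' (p : ℕ) : Measure (E p) :=
  ((volume : Measure (E p)).toSphere).map (Subtype.val : sphere (0 : E p) 1 → E p)

instance : IsFiniteMeasure (nu' p) := by
  constructor
  rw [nu', Measure.map_apply measurable_subtype_coe MeasurableSet.univ]
  exact measure_lt_top _ _

lemma nu'_apply [NeZero p] {u : Set (E p)} (hu : MeasurableSet u) :
    nu' p u = p * volume (sect p (sphere (0 : E p) 1 ∩ u)) := by
  rw [nu', Measure.map_apply measurable_subtype_coe hu,
    Measure.toSphere_apply' _ (measurable_subtype_coe hu),
    Subtype.image_preimage_coe,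
    smul_eq_sect inter_subset_left, finrank_euclideanSpace_fin]

lemma nu'_univ [NeZero p] : nu' p Set.univ = p * volume (ball (0 : E p) 1) := by
  rw [nu', Measure.map_apply measurable_subtype_coe MeasurableSet.univ, Set.preimage_univ,
    Measure.toSphere_apply_univ, finrank_euclideanSpace_fin]

lemma nu'_univ_ne_zero [NeZero p] : nu' p Set.univ ≠ 0 := by
  rw [nu'_univ]
  refine mul_ne_zero ?_ (measure_ball_pos _ _ one_pos).ne'
  exact Nat.cast_ne_zero.2 (NeZero.ne p)

lemma nu'_compl_sphere [NeZero p] : nu' p (sphere (0 : E p) 1)ᶜ = 0 := by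
  rw [nu', Measure.map_apply measurable_subtype_coe
    (isClosed_sphere.measurableSet.compl)]
  have : (Subtype.val ⁻¹' (sphere (0 : E p) 1)ᶜ : Set (sphere (0 : E p) 1)) = ∅ := by
    ext z; simp [z.2]
  rw [this]
  simp

lemma nu'_ae_sphere [NeZero p] : ∀ᵐ y ∂(nu' p), y ∈ sphere (0 : E p) 1 := by
  exact ae_iff.2 (nu'_compl_sphere (p := p))

/-- Uniformity of `nu'` on metric caps. -/
lemma nu'_cap_uniform [NeZero p] {x y : E p} (hx : x ∈ sphere (0 : E p) 1)
    (hy : y ∈ sphere (0 : E p) 1) (r : ℝ) :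
    nu' p (closedBall x r) = nu' p (closedBall y r) := by
  have hxy : ‖x‖ = ‖y‖ := by
    rw [mem_sphere_zero_iff_norm.1 hx, mem_sphere_zero_iff_norm.1 hy]
  obtain ⟨e, hex⟩ := exists_isometry x y hxy
  rw [nu'_apply measurableSet_closedBall, nu'_apply measurableSet_closedBall]
  congr 1
  have himg : sphere (0 : E p) 1 ∩ closedBall y r =
      ⇑e '' (sphere (0 : E p) 1 ∩ closedBall x r) := by
    rw [Set.inter_comm, Set.inter_comm (sphere (0 : E p) 1), image_cap, hex]
  rw [himg, image_eq_preimage_symm, ← sect_preimage]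
  have hms : MeasurableSet (sect p (sphere (0 : E p) 1 ∩ closedBall x r)) :=
    measurableSet_sect (isClosed_sphere.measurableSet.inter measurableSet_closedBall)
  exact ((e.symm.measurePreserving).measure_preimage hms.nullMeasurableSet).symm

/-- Positivity of `nu'` of caps. -/
lemma nu'_cap_ne_zero [NeZero p] {x : E p} (hx : x ∈ sphere (0 : E p) 1) {r : ℝ} (hr : 0 < r) :
    nu' p (closedBall x r) ≠ 0 := by
  intro h0
  obtain ⟨fs, hfs⟩ := (isCompact_sphere (0 : E p) 1).elim_finite_subcover
    (fun c : sphere (0 : E p) 1 => ball (c : E p) r) (fun _ => isOpen_ball)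
    (fun z hz => Set.mem_iUnion.2 ⟨⟨z, hz⟩, mem_ball_self hr⟩)
  have h1 : nu' p Set.univ ≤ ∑ c ∈ fs, nu' p (ball (c : E p) r) := by
    calc nu' p Set.univ ≤ nu' p (sphere (0 : E p) 1) + nu' p (sphere (0 : E p) 1)ᶜ := by
          rw [← Set.union_compl_self (sphere (0 : E p) 1)]; exact measure_union_le _ _
      _ = nu' p (sphere (0 : E p) 1) := by rw [nu'_compl_sphere, add_zero]
      _ ≤ nu' p (⋃ c ∈ fs, ball (c : E p) r) := measure_mono hfs
      _ ≤ ∑ c ∈ fs, nu' p (ball (c : E p) r) := measure_biUnion_finset_le _ _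
  have h2 : ∀ c ∈ fs, nu' p (ball (c : E p) r) = 0 := by
    intro c _
    refine le_antisymm ?_ zero_le
    calc nu' p (ball (c : E p) r) ≤ nu' p (closedBall (c : E p) r) :=
          measure_mono ball_subset_closedBall
      _ = nu' p (closedBall x r) := nu'_cap_uniform c.2 hx r
      _ = 0 := h0
  rw [Finset.sum_congr rfl h2, Finset.sum_const, smul_zero] at h1
  exact nu'_univ_ne_zero (le_antisymm h1 zero_le)

/-- The unit vector `e₀`. -/
noncomputable def e0 (p : ℕ) [NeZero p] : E p := EuclideanSpace.single (0 : Fin p) (1 : ℝ)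

lemma e0_mem [NeZero p] : e0 p ∈ sphere (0 : E p) 1 := by
  rw [mem_sphere_zero_iff_norm, e0, EuclideanSpace.norm_single, norm_one]

/-- Sector over the cap at height `t` is inside a small ball. -/
lemma sect_subset [NeZero p] {t : ℝ} (ht : 0 < t) (ht2 : t ^ 2 ≤ 1 / 2) :
    sect p (sphere (0 : E p) 1 ∩ {a : E p | t ≤ a 0}) ⊆
      closedBall (t • e0 p) (Real.sqrt (1 - t ^ 2)) := by
  rintro z ⟨hz1, hz2, -, hz3⟩
  have hz0 : t * ‖z‖ ≤ z 0 := by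
    have h := hz3
    simp only [Set.mem_setOf_eq, PiLp.smul_apply, smul_eq_mul] at h
    have h1 : ‖z‖ * t ≤ ‖z‖ * (‖z‖⁻¹ * z 0) := mul_le_mul_of_nonneg_left h (norm_nonneg z)
    have h2 : ‖z‖ * (‖z‖⁻¹ * z 0) = z 0 := by field_simp
    linarith
  have hnormsq : ‖z - t • e0 p‖ ^ 2 = ‖z‖ ^ 2 - 2 * (t * z 0) + t ^ 2 := by
    rw [norm_sub_sq_real]
    have hinner : inner ℝ z (t • e0 p) = t * z 0 := by
      rw [real_inner_smul_right, e0, EuclideanSpace.inner_single_right]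
      simp
    rw [hinner, norm_smul, e0, EuclideanSpace.norm_single, norm_one, mul_one,
      Real.norm_eq_abs, abs_of_pos ht]
    try ring
  have hkey : ‖z - t • e0 p‖ ^ 2 ≤ 1 - t ^ 2 := by
    rw [hnormsq]
    have h1 : t * (t * ‖z‖) ≤ t * z 0 := mul_le_mul_of_nonneg_left hz0 ht.le
    nlinarith [mul_nonneg (sub_nonneg.2 hz1.le) (by nlinarith : (0:ℝ) ≤ ‖z‖ + 1 - 2 * t ^ 2)]
  rw [mem_closedBall, dist_eq_norm]
  exact (Real.le_sqrt (norm_nonneg _) (by nlinarith)).2 hkey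

lemma nu'_cap_le [NeZero p] {t : ℝ} (ht : 0 < t) (ht2 : t ^ 2 ≤ 1 / 2) :
    nu' p {a : E p | t ≤ a 0} ≤
      ENNReal.ofReal (Real.sqrt (1 - t ^ 2) ^ p) * nu' p Set.univ := by
  have hmeas : MeasurableSet {a : E p | t ≤ a 0} :=
    (isClosed_le continuous_const (coord_cont 0)).measurableSet
  rw [nu'_apply hmeas, nu'_univ]
  calc (p : ℝ≥0∞) * volume (sect p (sphere (0 : E p) 1 ∩ {a : E p | t ≤ a 0}))
      ≤ (p : ℝ≥0∞) * volume (closedBall (t • e0 p) (Real.sqrt (1 - t ^ 2))) := by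
        exact mul_le_mul_right (measure_mono (sect_subset ht ht2)) _
    _ = (p : ℝ≥0∞) * (ENNReal.ofReal (Real.sqrt (1 - t ^ 2) ^ Module.finrank ℝ (E p)) *
          volume (ball (0 : E p) 1)) := by
        rw [Measure.addHaar_closedBall _ _ (Real.sqrt_nonneg _)]
    _ = ENNReal.ofReal (Real.sqrt (1 - t ^ 2) ^ p) * ((p : ℝ≥0∞) * volume (ball (0 : E p) 1)) := by
        rw [finrank_euclideanSpace_fin]; ring

/-- Key comparison: Hausdorff cap ratio is dominated by the `nu'` ratio of a slightly
larger cap. -/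
lemma ratio_le [NeZero p] {c t : ℝ} (htc : t < c)
    (hSt : μH[(p : ℝ) - 1] (sphere (0 : E p) 1) ≠ ⊤) :
    μH[(p : ℝ) - 1] ({a : E p | c ≤ a 0} ∩ sphere (0 : E p) 1) * nu' p Set.univ ≤
      μH[(p : ℝ) - 1] (sphere (0 : E p) 1) * nu' p {a : E p | t ≤ a 0} := by
  set S : Set (E p) := sphere (0 : E p) 1 with hS
  set mH : Measure (E p) := μH[(p : ℝ) - 1] with hmH
  have hSmeas : MeasurableSet S := isClosed_sphere.measurableSet
  have hCmeas : MeasurableSet {a : E p | c ≤ a 0} :=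
    (isClosed_le continuous_const (coord_cont 0)).measurableSet
  have hCtmeas : MeasurableSet {a : E p | t ≤ a 0} :=
    (isClosed_le continuous_const (coord_cont 0)).measurableSet
  set A : Set (E p) := {a : E p | c ≤ a 0} ∩ S with hA
  have hAmeas : MeasurableSet A := hCmeas.inter hSmeas
  set r : ℝ := c - t with hr
  have hrpos : 0 < r := by simp [hr]; linarith
  set F : ℝ≥0∞ := mH (closedBall (e0 p) r ∩ S) with hF
  set G : ℝ≥0∞ := nu' p (closedBall (e0 p) r) with hG
  set T : Set (E p × E p) := {q | dist q.1 q.2 ≤ r} with hT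
  have hTmeas : MeasurableSet T :=
    (isClosed_le (continuous_fst.dist continuous_snd) continuous_const).measurableSet
  have hfin : ∀ u : Set (E p), u ⊆ S → mH u < ⊤ := fun u hu =>
    lt_of_le_of_lt (measure_mono hu) hSt.lt_top
  haveI : IsFiniteMeasure (mH.restrict A) :=
    ⟨by rw [Measure.restrict_apply_univ]; exact hfin A inter_subset_right⟩
  haveI : IsFiniteMeasure (mH.restrict S) :=
    ⟨by rw [Measure.restrict_apply_univ]; exact hfin S subset_rfl⟩
  -- preimages of T
  have hpre1 : ∀ x : E p, Prod.mk x ⁻¹' T = closedBall x r := by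
    intro x; ext y; simp [hT, mem_closedBall, dist_comm]
  have hpre2 : ∀ y : E p, (fun x => (x, y)) ⁻¹' T = closedBall y r := by
    intro y; ext x; simp [hT, mem_closedBall]
  -- first computation : for restriction to a subset u of S,
  have key : ∀ u : Set (E p), MeasurableSet u → u ⊆ S →
      ((mH.restrict u).prod (nu' p)) T = G * mH u := by
    intro u humeas huS
    haveI : IsFiniteMeasure (mH.restrict u) :=
      ⟨by rw [Measure.restrict_apply_univ]; exact hfin u huS⟩
    rw [Measure.prod_apply hTmeas]
    have : ∀ᵐ x ∂(mH.restrict u), nu' p (Prod.mk x ⁻¹' T) = G := by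
      filter_upwards [ae_restrict_mem humeas] with x hx
      rw [hpre1 x]
      exact nu'_cap_uniform (huS hx) e0_mem r
    rw [lintegral_congr_ae this, lintegral_const, Measure.restrict_apply_univ, mul_comm]
  -- (I)
  have hI : G * mH A ≤ F * nu' p {a : E p | t ≤ a 0} := by
    rw [← key A hAmeas inter_subset_right, Measure.prod_apply_symm hTmeas]
    have hbd : ∀ᵐ y ∂(nu' p), (mH.restrict A) ((fun x => (x, y)) ⁻¹' T) ≤
        ({a : E p | t ≤ a 0}).indicator (fun _ => F) y := by
      filter_upwards [nu'_ae_sphere] with y hyS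
      rw [hpre2 y, Measure.restrict_apply measurableSet_closedBall]
      by_cases hyC : y ∈ {a : E p | t ≤ a 0}
      · rw [Set.indicator_of_mem hyC]
        calc mH (closedBall y r ∩ A) ≤ mH (closedBall y r ∩ S) :=
              measure_mono (Set.inter_subset_inter_right _ inter_subset_right)
          _ = F := hausdorff_cap_uniform hyS e0_mem r
      · rw [Set.indicator_of_notMem hyC]
        have hempty : closedBall y r ∩ A = ∅ := by
          ext x
          simp only [Set.mem_inter_iff, Set.mem_empty_iff_false, iff_false, not_and,
            mem_closedBall, hA, Set.mem_setOf_eq]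
          intro hxy hx
          exfalso
          apply hyC
          have h1 : |x 0 - y 0| ≤ dist x y := by
            rw [dist_eq_norm]
            simpa [PiLp.sub_apply] using abs_coord_le (x - y) 0
          have h2 : c ≤ x 0 := hx
          have : x 0 - y 0 ≤ r := le_trans (le_abs_self _) (le_trans h1 hxy)
          show t ≤ y 0
          simp only [hr] at this
          linarith
        rw [hempty]
        simp
    calc ∫⁻ y, (mH.restrict A) ((fun x => (x, y)) ⁻¹' T) ∂(nu' p)
        ≤ ∫⁻ y, ({a : E p | t ≤ a 0}).indicator (fun _ => F) y ∂(nu' p) :=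
          lintegral_mono_ae hbd
      _ = F * nu' p {a : E p | t ≤ a 0} := by
          rw [lintegral_indicator hCtmeas, setLIntegral_const, mul_comm]
  -- (II)
  have hII : G * mH S = F * nu' p Set.univ := by
    rw [← key S hSmeas subset_rfl, Measure.prod_apply_symm hTmeas]
    have : ∀ᵐ y ∂(nu' p), (mH.restrict S) ((fun x => (x, y)) ⁻¹' T) = F := by
      filter_upwards [nu'_ae_sphere] with y hyS
      rw [hpre2 y, Measure.restrict_apply measurableSet_closedBall]
      exact hausdorff_cap_uniform hyS e0_mem r
    rw [lintegral_congr_ae this, lintegral_const, mul_comm]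
  -- combine
  have hG0 : G ≠ 0 := nu'_cap_ne_zero e0_mem hrpos
  have hGtop : G ≠ ⊤ := (measure_lt_top (nu' p) _).ne
  have hmain : G * (mH A * nu' p Set.univ) ≤ G * (mH S * nu' p {a : E p | t ≤ a 0}) := by
    calc G * (mH A * nu' p Set.univ) = (G * mH A) * nu' p Set.univ := by ring
      _ ≤ (F * nu' p {a : E p | t ≤ a 0}) * nu' p Set.univ := by
          exact mul_le_mul_left hI _
      _ = (F * nu' p Set.univ) * nu' p {a : E p | t ≤ a 0} := by ring
      _ = (G * mH S) * nu' p {a : E p | t ≤ a 0} := by rw [hII]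
      _ = G * (mH S * nu' p {a : E p | t ≤ a 0}) := by ring
  exact (ENNReal.mul_le_mul_iff_right hG0 hGtop).1 hmain

/-- Volume bound for spherical caps in terms of the Hausdorff measure. -/
lemma sphereVol_le [NeZero p] {c t : ℝ} (ht0 : 0 < t) (ht2 : t ^ 2 ≤ 1 / 2) (htc : t < c) :
    sphereVol p {a : E p | c ≤ a 0} ≤ Real.sqrt (1 - t ^ 2) ^ p := by
  have hRnn : 0 ≤ Real.sqrt (1 - t ^ 2) ^ p := pow_nonneg (Real.sqrt_nonneg _) _
  set mH : Measure (E p) := μH[(p : ℝ) - 1] with hmH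
  set S : Set (E p) := Metric.sphere (0 : E p) 1 with hS
  by_cases hStop : mH S = ⊤
  · unfold sphereVol
    rw [← hmH, ← hS, hStop]
    simp [hRnn]
  by_cases hS0 : mH S = 0
  · unfold sphereVol
    rw [← hmH, ← hS, hS0]
    simp [hRnn]
  -- main case
  have hratio := ratio_le (p := p) htc hStop
  have hnuuniv_ne : nu' p Set.univ ≠ 0 := nu'_univ_ne_zero
  have hnuuniv_top : nu' p Set.univ ≠ ⊤ := (measure_lt_top _ _).ne
  have hcap := nu'_cap_le (p := p) ht0 ht2
  have hAfin : mH ({a : E p | c ≤ a 0} ∩ S) ≠ ⊤ :=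
    (lt_of_le_of_lt (measure_mono inter_subset_right) (lt_top_iff_ne_top.2 hStop)).ne
  have hCtfin : nu' p {a : E p | t ≤ a 0} ≠ ⊤ := (measure_lt_top _ _).ne
  -- convert hratio to reals
  have h1 : (mH ({a : E p | c ≤ a 0} ∩ S)).toReal * (nu' p Set.univ).toReal ≤
      (mH S).toReal * (nu' p {a : E p | t ≤ a 0}).toReal := by
    rw [← ENNReal.toReal_mul, ← ENNReal.toReal_mul]
    exact ENNReal.toReal_mono (ENNReal.mul_ne_top hStop hCtfin) hratio
  have h2 : (nu' p {a : E p | t ≤ a 0}).toReal ≤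
      Real.sqrt (1 - t ^ 2) ^ p * (nu' p Set.univ).toReal := by
    have := ENNReal.toReal_mono (ENNReal.mul_ne_top ENNReal.ofReal_ne_top hnuuniv_top) hcap
    rwa [ENNReal.toReal_mul, ENNReal.toReal_ofReal hRnn] at this
  have hSpos : 0 < (mH S).toReal := ENNReal.toReal_pos hS0 hStop
  have hupos : 0 < (nu' p Set.univ).toReal := ENNReal.toReal_pos hnuuniv_ne hnuuniv_top
  unfold sphereVol
  rw [← hmH, ← hS]
  rw [div_le_iff₀ hSpos]
  -- goal : num ≤ R^p * mH S
  have h3 : (mH ({a : E p | c ≤ a 0} ∩ S)).toReal * (nu' p Set.univ).toReal ≤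
      (mH S).toReal * (Real.sqrt (1 - t ^ 2) ^ p * (nu' p Set.univ).toReal) :=
    le_trans h1 (by
      exact mul_le_mul_of_nonneg_left h2 hSpos.le)
  have := (mul_le_mul_iff_left₀ hupos).1 (by linarith [h3] : (mH ({a : E p | c ≤ a 0} ∩ S)).toReal *
      (nu' p Set.univ).toReal ≤ (Real.sqrt (1 - t ^ 2) ^ p * (mH S).toReal) *
      (nu' p Set.univ).toReal)
  linarith [this]

set_option maxHeartbeats 1000000 in
/-- Main numeric estimate. -/
lemma arith_main {p : ℕ} {L s t : ℝ} (hq : 41 ≤ (p : ℝ)) (hL2 : 2 < L)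
    (hLq : L < (p : ℝ) / 20) (hs : s = Real.sqrt (2 * L / ((p : ℝ) - 1)))
    (ht : t = Real.sin (Real.pi / 2 * s)) :
    0 < t ∧ t ^ 2 ≤ 1 / 2 ∧ Real.sqrt (1 - t ^ 2) ^ p < Real.exp (-L) / 4 := by
  have hq1 : (1 : ℝ) < (p : ℝ) := by linarith
  have hL0 : 0 < L := by linarith
  have hs2 : s ^ 2 = 2 * L / ((p : ℝ) - 1) := by
    rw [hs]; exact Real.sq_sqrt (div_nonneg (by linarith) (by linarith))
  have hspos : 0 < s := by
    rw [hs]; exact Real.sqrt_pos.2 (div_pos (by linarith) (by linarith))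
  have hs2ub : s ^ 2 ≤ 41 / 400 := by
    rw [hs2, div_le_div_iff₀ (by linarith) (by norm_num)]
    nlinarith
  set x := Real.pi / 2 * s with hx
  have hpi_lb : 3.141592 < Real.pi := Real.pi_gt_d6
  have hpi_ub : Real.pi < 3.15 := Real.pi_lt_d2
  have hxpos : 0 < x := by
    rw [hx]; positivity
  have hpisq : Real.pi ^ 2 ≤ 9.9225 := by nlinarith [Real.pi_pos]
  have hx2 : x ^ 2 ≤ 2543 / 10000 := by
    have hxx : x ^ 2 = Real.pi ^ 2 / 4 * s ^ 2 := by rw [hx]; ring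
    rw [hxx]
    have h1 : Real.pi ^ 2 * s ^ 2 ≤ 9.9225 * (41 / 400) :=
      mul_le_mul hpisq hs2ub (sq_nonneg s) (by norm_num)
    nlinarith
  have hx1 : x ≤ 1 := by nlinarith [sq_nonneg (x - 1)]
  have htlb : x - x ^ 3 / 4 < t := by rw [ht]; have h := Real.sin_gt_sub_cube hxpos; linarith [pow_pos hxpos 3]
  have htub : t < x := by rw [ht]; exact Real.sin_lt hxpos
  have hx3 : x * x ^ 2 ≤ x * (2543 / 10000) := mul_le_mul_of_nonneg_left hx2 hxpos.le
  have htpos : 0 < t := by nlinarith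
  have ht2 : t ^ 2 ≤ 1 / 2 := by
    have h1 : t ^ 2 ≤ x ^ 2 := pow_le_pow_left₀ htpos.le htub.le 2
    linarith
  have hxs : 1570 / 1000 * s ≤ x := by nlinarith
  have htls : 147 / 100 * s ≤ t := by
    have h936 : (9364 : ℝ) / 10000 ≤ 1 - x ^ 2 / 4 := by linarith
    have h1 : x * (9364 / 10000) ≤ x * (1 - x ^ 2 / 4) :=
      mul_le_mul_of_nonneg_left h936 hxpos.le
    have h2 : (1570 / 1000 * s) * (9364 / 10000) ≤ x * (9364 / 10000) :=
      mul_le_mul_of_nonneg_right hxs (by norm_num)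
    have h3 : x * (1 - x ^ 2 / 4) = x - x ^ 3 / 4 := by ring
    nlinarith [hspos.le]
  have hts2 : 216 / 100 * s ^ 2 ≤ t ^ 2 := by
    have h1 : (147 / 100 * s) ^ 2 ≤ t ^ 2 :=
      pow_le_pow_left₀ (by linarith : (0 : ℝ) ≤ 147 / 100 * s) htls 2
    nlinarith [h1, sq_nonneg s]
  have hq0 : (0 : ℝ) < (p : ℝ) := by linarith
  have ha : ((p : ℝ) - 1) * s ^ 2 = 2 * L := by
    rw [hs2]; field_simp
    exact div_self (ne_of_gt (by linarith : (0:ℝ) < (p : ℝ) - 1))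
  have hb : ((p : ℝ) - 1) * s ^ 2 ≤ (p : ℝ) * s ^ 2 := by nlinarith [sq_nonneg s]
  have hc : (p : ℝ) * (216 / 100 * s ^ 2) ≤ (p : ℝ) * t ^ 2 :=
    mul_le_mul_of_nonneg_left hts2 hq0.le
  have hpt : 216 / 100 * L ≤ (p : ℝ) * t ^ 2 / 2 := by linarith
  refine ⟨htpos, ht2, ?_⟩
  have hstep1 : Real.sqrt (1 - t ^ 2) ≤ Real.exp (-(t ^ 2) / 2) := by
    have h1 : 1 - t ^ 2 ≤ Real.exp (-(t ^ 2)) := Real.one_sub_le_exp_neg _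
    have h3 : Real.exp (-(t ^ 2) / 2) ^ 2 = Real.exp (-(t ^ 2)) := by
      rw [sq, ← Real.exp_add]; ring_nf
    calc Real.sqrt (1 - t ^ 2) ≤ Real.sqrt (Real.exp (-(t ^ 2))) := Real.sqrt_le_sqrt h1
      _ = Real.sqrt (Real.exp (-(t ^ 2) / 2) ^ 2) := by rw [h3]
      _ = Real.exp (-(t ^ 2) / 2) := Real.sqrt_sq (Real.exp_nonneg _)
  have hstep2 : Real.sqrt (1 - t ^ 2) ^ p ≤ Real.exp ((p : ℝ) * (-(t ^ 2) / 2)) := by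
    rw [Real.exp_nat_mul]
    exact pow_le_pow_left₀ (Real.sqrt_nonneg _) hstep1 p
  have hlog4 : Real.log 4 < 7 / 5 := by
    have h4 : Real.log 4 = 2 * Real.log 2 := by
      rw [show (4 : ℝ) = 2 ^ 2 by norm_num, Real.log_pow]; push_cast; ring
    nlinarith [Real.log_two_lt_d9]
  have hexp4 : (4 : ℝ) < Real.exp ((p : ℝ) * t ^ 2 / 2 - L) := by
    calc (4 : ℝ) = Real.exp (Real.log 4) := (Real.exp_log (by norm_num)).symm
      _ < Real.exp ((p : ℝ) * t ^ 2 / 2 - L) := Real.exp_lt_exp.2 (by linarith)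
  have hmul : Real.exp ((p : ℝ) * (-(t ^ 2) / 2)) * 4 < Real.exp (-L) := by
    calc Real.exp ((p : ℝ) * (-(t ^ 2) / 2)) * 4
        < Real.exp ((p : ℝ) * (-(t ^ 2) / 2)) * Real.exp ((p : ℝ) * t ^ 2 / 2 - L) := by
          exact (mul_lt_mul_iff_right₀ (Real.exp_pos _)).2 hexp4
      _ = Real.exp (-L) := by rw [← Real.exp_add]; ring_nf
  have hfin : Real.exp ((p : ℝ) * (-(t ^ 2) / 2)) < Real.exp (-L) / 4 := by
    rw [lt_div_iff₀ (by norm_num : (0 : ℝ) < 4)]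
    exact hmul
  exact lt_of_le_of_lt hstep2 hfin

end CapAux

theorem stmt12 {p : ℕ} [NeZero p] (hp : 12 ≤ p) (μ ψ : ℝ)
    (hμlo : (1 / 4) * Real.exp (-(p : ℝ) / 20) < μ) (hμhi : μ < 1 / (4 * Real.exp 2))
    (hψ : ψ ∈ Set.Icc 0 Real.pi) (hcap : capVolAngle p ψ = μ) :
    ψ ≥ (Real.pi / 2) * (1 - Real.sqrt (2 * Real.log (1 / (4 * μ)) / ((p : ℝ) - 1))) := by
  have hμpos : 0 < μ := lt_trans (by positivity) hμlo
  have h4μ : 0 < 4 * μ := by linarith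
  -- p ≥ 41
  have hq40 : (40 : ℝ) < (p : ℝ) := by
    have hchain : (1 / 4 : ℝ) * Real.exp (-(p : ℝ) / 20) < 1 / (4 * Real.exp 2) := hμlo.trans hμhi
    have hrhs : (1 : ℝ) / (4 * Real.exp 2) = (1 / 4) * Real.exp (-2) := by
      rw [Real.exp_neg]; field_simp
    rw [hrhs] at hchain
    have := (Real.exp_lt_exp).1 (by linarith : Real.exp (-(p : ℝ) / 20) < Real.exp (-2))
    linarith
  have hp41 : (41 : ℝ) ≤ (p : ℝ) := by
    have : (40 : ℕ) < p := by exact_mod_cast hq40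
    exact_mod_cast this
  set L : ℝ := Real.log (1 / (4 * μ)) with hL
  have hLneg : L = -Real.log (4 * μ) := by rw [hL, one_div, Real.log_inv]
  have hexpL : Real.exp (-L) = 4 * μ := by
    rw [hLneg, neg_neg, Real.exp_log h4μ]
  have hμeq : μ = Real.exp (-L) / 4 := by rw [hexpL]; ring
  have hL2 : 2 < L := by
    have h1 : 4 * μ < Real.exp (-2) := by
      have : (1 : ℝ) / (4 * Real.exp 2) = Real.exp (-2) / 4 := by
        rw [Real.exp_neg]; field_simp
      rw [this] at hμhi; linarith
    have h2 := Real.log_lt_log h4μ h1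
    rw [Real.log_exp] at h2
    linarith [hLneg, h2]
  have hLq : L < (p : ℝ) / 20 := by
    have h1 : Real.exp (-(p : ℝ) / 20) < 4 * μ := by linarith
    have := Real.log_lt_log (Real.exp_pos _) h1
    rw [Real.log_exp] at this
    rw [hLneg]
    linarith
  set s : ℝ := Real.sqrt (2 * L / ((p : ℝ) - 1)) with hs
  set t : ℝ := Real.sin (Real.pi / 2 * s) with ht
  obtain ⟨ht0, ht2, hfin⟩ := CapAux.arith_main (p := p) hp41 hL2 hLq hs ht
  by_contra hcon
  push_neg at hcon
  -- θ := π/2 * (1 - s)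
  have hspos : 0 < s := by
    rw [hs]
    exact Real.sqrt_pos.2 (div_pos (by linarith) (by linarith))
  have hθπ : Real.pi / 2 * (1 - s) ≤ Real.pi := by
    nlinarith [Real.pi_pos, hspos]
  have hcosθ : Real.cos (Real.pi / 2 * (1 - s)) = t := by
    have harg : Real.pi / 2 * (1 - s) = Real.pi / 2 - Real.pi / 2 * s := by ring
    rw [harg, Real.cos_pi_div_two_sub, ht]
  have hcos : t < Real.cos ψ := by
    rw [← hcosθ]
    exact Real.cos_lt_cos_of_nonneg_of_le_pi hψ.1 hθπ hcon
  have happ := CapAux.sphereVol_le (p := p) ht0 ht2 hcos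
  have hcap' : capVolAngle p ψ = sphereVol p {a : EuclideanSpace ℝ (Fin p) | Real.cos ψ ≤ a 0} :=
    rfl
  rw [← hcap', hcap] at happ
  rw [hμeq] at happ
  linarith
end

section
/- For all x ∈ [0, π], sin(x) ≤ exp(−(x − π/2)²/2). -/
open Real

set_option maxHeartbeats 1600000 in
lemma key_cos_exp {t : ℝ} (ht0 : 0 ≤ t) (ht : t ≤ Real.pi / 2) :
    Real.cos t ≤ Real.exp (-t ^ 2 / 2) := by
  set s := t / 2 with hs_def
  have hpi : Real.pi ≤ 3.15 := by linarith [Real.pi_lt_d2]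
  have hs0 : 0 ≤ s := by positivity
  have hs1 : s ≤ 0.7875 := by rw [hs_def]; nlinarith
  have hsin : s - s ^ 3 / 4 ≤ Real.sin s := by
    rcases eq_or_lt_of_le hs0 with h | h
    · simp [← h]
    · exact le_of_lt (lt_of_le_of_lt (by nlinarith [pow_nonneg hs0 3]) (Real.sin_gt_sub_cube h))
  have hsin0 : 0 ≤ s - s ^ 3 / 4 := by nlinarith [sq_nonneg s, mul_nonneg hs0 hs0]
  have hcos : Real.cos t = 1 - 2 * Real.sin s ^ 2 := by
    have h2 : t = 2 * s := by rw [hs_def]; ring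
    rw [h2, Real.cos_two_mul]
    have := Real.sin_sq_add_cos_sq s
    nlinarith
  set v := s ^ 2 with hv_def
  have hv0 : 0 ≤ v := sq_nonneg s
  have hv1 : v ≤ 0.63 := by rw [hv_def]; nlinarith
  have hcos_le : Real.cos t ≤ 1 - 2 * v + v ^ 2 - v ^ 3 / 8 := by
    rw [hcos]
    have hexpand : 1 - 2 * (s - s ^ 3 / 4) ^ 2 = 1 - 2 * v + v ^ 2 - v ^ 3 / 8 := by
      rw [hv_def]; ring
    nlinarith [sq_nonneg (Real.sin s - (s - s ^ 3 / 4))]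
  have hexp1 : 1 - v + v ^ 2 / 2 - v ^ 3 / 6 - v ^ 4 * (5 / 96) ≤ Real.exp (-v) := by
    have hb := Real.exp_bound (x := -v) (by rw [abs_neg, abs_of_nonneg hv0]; linarith)
      (n := 4) (by norm_num)
    rw [abs_le] at hb
    have h1 := hb.1
    have hsum : ∑ m ∈ Finset.range 4, (-v) ^ m / (m.factorial : ℝ)
        = 1 - v + v ^ 2 / 2 - v ^ 3 / 6 := by
      norm_num [Finset.sum_range_succ, Nat.factorial]
      ring
    rw [hsum, abs_neg, abs_of_nonneg hv0] at h1
    norm_num [Nat.factorial] at h1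
    linarith
  have hP0 : 0 ≤ 1 - v + v ^ 2 / 2 - v ^ 3 / 6 - v ^ 4 * (5 / 96) := by
    nlinarith [mul_nonneg hv0 hv0, mul_nonneg (mul_nonneg hv0 hv0) hv0,
      sq_nonneg (v * v)]
  have hexp2 : Real.exp (-t ^ 2 / 2) = Real.exp (-v) * Real.exp (-v) := by
    rw [← Real.exp_add]
    congr 1
    rw [hv_def, hs_def]; ring
  have hexpsq : (1 - v + v ^ 2 / 2 - v ^ 3 / 6 - v ^ 4 * (5 / 96)) ^ 2
      ≤ Real.exp (-t ^ 2 / 2) := by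
    rw [hexp2]
    nlinarith [Real.exp_pos (-v)]
  refine hcos_le.trans (le_trans ?_ hexpsq)
  nlinarith [mul_nonneg hv0 hv0, mul_nonneg (mul_nonneg hv0 hv0) hv0,
    sq_nonneg (v * v), mul_nonneg (mul_nonneg (mul_nonneg hv0 hv0) hv0) hv0,
    sq_nonneg (v * v * v), sq_nonneg (v * v * v * v), sq_nonneg (v * (1 - v)),
    sq_nonneg (v * v * (1 - v))]

theorem stmt13 (x : ℝ) (hx : x ∈ Set.Icc 0 Real.pi) :
    Real.sin x ≤ Real.exp (-(x - Real.pi / 2) ^ 2 / 2) := by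
  obtain ⟨h0, h1⟩ := hx
  have hsin : Real.sin x = Real.cos (x - Real.pi / 2) := by
    rw [show x - Real.pi / 2 = -(Real.pi / 2 - x) by ring, Real.cos_neg,
      Real.cos_pi_div_two_sub]
  rw [hsin]
  rcases le_or_gt 0 (x - Real.pi / 2) with h | h
  · exact key_cos_exp h (by linarith)
  · have := key_cos_exp (t := -(x - Real.pi / 2)) (by linarith) (by linarith)
    rwa [Real.cos_neg, neg_sq] at this
end
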